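/- arXiv:0804.4302 — 4 statements merged into one kernel-verified Lean document; each statement's English description precedes it below -/
import Mathlib

section
/- There is a universal constant C > 0 with the following property. Let r, R, δ, Δ > 0 satisfy 2δ ≤ r and 2Δ ≤ R, and let ξ₀ ∈ ℝ³ with ξ₀ ≠ 0. Then the Lebesgue measure of the intersection S_δ(r) ∩ (ξ₀ + S_Δ(R)) is at most C·rRδΔ/|ξ₀|, where S_δ(r) = {ξ ∈ ℝ³ : r − δ ≤ |ξ| ≤ r + δ} and ξ₀ + S_Δ(R) = {ξ₀ + η : η ∈ S_Δ(R)}. -/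
open MeasureTheory Set
open scoped ENNReal

noncomputable section

abbrev E3 : Type := EuclideanSpace ℝ (Fin 3)

/-- The δ-thickened sphere of radius `r` centered at the origin. -/
def thickSphere (r δ : ℝ) : Set E3 := {ξ | r - δ ≤ ‖ξ‖ ∧ ‖ξ‖ ≤ r + δ}

/-!
Every point `ξ` of the intersection satisfies `2⟪ξ₀, ξ⟫ = ‖ξ‖² + ‖ξ₀‖² - ‖ξ - ξ₀‖²`, so the
intersection lies in a slab orthogonal to `ξ₀` of width `2 (r δ + R Δ) / ‖ξ₀‖`. Each plane
orthogonal to `ξ₀` cuts the shell `thickSphere r δ` in an annulus of area at most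
`π ((r + δ)² - (r - δ)²) = 4 π r δ` (Archimedes), so by Fubini the intersection has volume at most
`8 π r δ (r δ + R Δ) / ‖ξ₀‖`. By translation invariance the two shells may be exchanged, so we may
assume `r δ ≤ R Δ`, and then `r δ (r δ + R Δ) ≤ 2 r δ R Δ`.
-/

open Metric Real Module
open scoped RealInnerProductSpace

theorem MeasureTheory.Measure.prod_le_mul_of_measure_slice_le {α β : Type*}
    [MeasurableSpace α] [MeasurableSpace β] {μ : Measure α} {ν : Measure β}
    {T : Set (α × β)} (hT : MeasurableSet T) {s : Set α} (hs : MeasurableSet s)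
    (hTs : ∀ p ∈ T, p.1 ∈ s) {A : ℝ≥0∞} (hA : ∀ a ∈ s, ν (Prod.mk a ⁻¹' T) ≤ A) :
    μ.prod ν T ≤ A * μ s :=
  calc μ.prod ν T ≤ ∫⁻ a, ν (Prod.mk a ⁻¹' T) ∂μ := Measure.prod_apply_le hT
    _ ≤ ∫⁻ a, s.indicator (fun _ => A) a ∂μ := lintegral_mono fun a => by
        by_cases ha : a ∈ s
        · simpa [ha] using hA a ha
        · have : Prod.mk a ⁻¹' T = ∅ := eq_empty_of_forall_notMem fun _ hb => ha (hTs _ hb)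
          simp [ha, this]
    _ = A * μ s := lintegral_indicator_const hs A

theorem EuclideanSpace.volume_closedBall_diff_ball_fin_two (x : EuclideanSpace ℝ (Fin 2))
    {s t : ℝ} (ht : 0 ≤ t) (hts : t ≤ s) :
    volume (closedBall x s \ ball x t) = ENNReal.ofReal (π * (s ^ 2 - t ^ 2)) := by
  rw [measure_sdiff (ball_subset_closedBall.trans (closedBall_subset_closedBall hts))
      measurableSet_ball.nullMeasurableSet measure_ball_lt_top.ne,
    volume_closedBall_fin_two, volume_ball_fin_two,
    ← ENNReal.sub_mul fun _ _ => ENNReal.ofReal_ne_top,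
    ← ENNReal.ofReal_pow (ht.trans hts), ← ENNReal.ofReal_pow ht,
    ← ENNReal.ofReal_sub _ (by positivity), ← ENNReal.ofReal_mul (by nlinarith), mul_comm]

theorem EuclideanSpace.volume_sq_norm_mem_Icc_le_fin_two {c d : ℝ} (hcd : c ≤ d) :
    volume {z : EuclideanSpace ℝ (Fin 2) | ‖z‖ ^ 2 ∈ Icc c d} ≤ ENNReal.ofReal (π * (d - c)) := by
  have hsub : {z : EuclideanSpace ℝ (Fin 2) | ‖z‖ ^ 2 ∈ Icc c d} ⊆
      closedBall 0 √d \ ball 0 √c := by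
    rintro z ⟨hc, hd⟩
    refine ⟨?_, ?_⟩
    · simpa [sqrt_sq (norm_nonneg z)] using sqrt_le_sqrt hd
    · simpa [sqrt_sq (norm_nonneg z)] using sqrt_le_sqrt hc
  calc _ ≤ _ := measure_mono hsub
    _ = ENNReal.ofReal (π * (max d 0 - max c 0)) := by
      rw [volume_closedBall_diff_ball_fin_two _ (sqrt_nonneg c) (sqrt_le_sqrt hcd), sq_sqrt',
        sq_sqrt']
    _ ≤ ENNReal.ofReal (π * (d - c)) := by
      refine ENNReal.ofReal_le_ofReal (mul_le_mul_of_nonneg_left ?_ pi_pos.le)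
      simp only [max_def]
      split_ifs <;> linarith

section InnerProductSpace

variable {E : Type*} [NormedAddCommGroup E] [InnerProductSpace ℝ E] [FiniteDimensional ℝ E]
  [MeasurableSpace E] [BorelSpace E]

theorem exists_measurePreserving_inner_prod {n : ℕ} (hn : finrank ℝ E = n + 1) {u : E}
    (hu : ‖u‖ = 1) :
    ∃ f : E → ℝ × EuclideanSpace ℝ (Fin n), MeasurePreserving f ∧
      ∀ ξ, (f ξ).1 = ⟪u, ξ⟫ ∧ ‖ξ‖ ^ 2 = (f ξ).1 ^ 2 + ‖(f ξ).2‖ ^ 2 := by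
  have hsingleton : Orthonormal ℝ (({0} : Set (Fin (n + 1))).domRestrict fun _ => u) :=
    ⟨fun _ => hu, fun i j hij => absurd (Subtype.ext (i.2.trans j.2.symm)) hij⟩
  obtain ⟨b, hb⟩ := hsingleton.exists_orthonormalBasis_extension_of_card_eq (by simpa using hn)
  refine ⟨Prod.map id (WithLp.toLp 2) ∘ MeasurableEquiv.piFinSuccAbove (fun _ => ℝ) 0 ∘
    WithLp.ofLp ∘ b.repr, ?_, fun ξ => ⟨?_, ?_⟩⟩
  · exact ((MeasurePreserving.id volume).prod (PiLp.volume_preserving_toLp _)).comp <|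
      (volume_preserving_piFinSuccAbove _ 0).comp <|
        (PiLp.volume_preserving_ofLp _).comp b.measurePreserving_repr
  · simp [← hb 0 rfl, b.repr_apply_apply]
  · rw [← b.repr.norm_map, EuclideanSpace.norm_sq_eq, EuclideanSpace.norm_sq_eq, Fin.sum_univ_succ]
    simp [Fin.tail]

theorem volume_shell_inter_slab_le (hE : finrank ℝ E = 3) {u : E} (hu : ‖u‖ = 1) {c d : ℝ}
    (hcd : c ≤ d) (α β : ℝ) :
    volume {ξ : E | ‖ξ‖ ^ 2 ∈ Icc c d ∧ ⟪u, ξ⟫ ∈ Icc α β} ≤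
      ENNReal.ofReal (π * (d - c) * (β - α)) := by
  obtain ⟨f, hf, hfu⟩ := exists_measurePreserving_inner_prod hE hu
  set T : Set (ℝ × EuclideanSpace ℝ (Fin 2)) := {p | p.1 ∈ Icc α β ∧ p.1 ^ 2 + ‖p.2‖ ^ 2 ∈ Icc c d}
  have hT : MeasurableSet T := by
    refine (measurable_fst measurableSet_Icc).inter (measurableSet_Icc.preimage ?_)
    fun_prop
  have hpre : {ξ : E | ‖ξ‖ ^ 2 ∈ Icc c d ∧ ⟪u, ξ⟫ ∈ Icc α β} = f ⁻¹' T := by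
    ext ξ
    simp only [mem_ofPred_eq, mem_preimage, T, ← (hfu ξ).1, ← (hfu ξ).2, and_comm]
  have hslice : ∀ t ∈ Icc α β, volume (Prod.mk t ⁻¹' T) ≤ ENNReal.ofReal (π * (d - c)) := by
    intro t _
    calc volume (Prod.mk t ⁻¹' T)
        ≤ volume {z : EuclideanSpace ℝ (Fin 2) | ‖z‖ ^ 2 ∈ Icc (c - t ^ 2) (d - t ^ 2)} :=
          measure_mono fun z ⟨_, hc, hd⟩ => ⟨by linarith, by linarith⟩
      _ ≤ ENNReal.ofReal (π * (d - c)) := by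
          refine (EuclideanSpace.volume_sq_norm_mem_Icc_le_fin_two (c := c - t ^ 2)
            (d := d - t ^ 2) (by linarith)).trans_eq ?_
          congr 2
          ring
  calc volume {ξ : E | ‖ξ‖ ^ 2 ∈ Icc c d ∧ ⟪u, ξ⟫ ∈ Icc α β} = volume T := by
        rw [hpre, hf.measure_preimage hT.nullMeasurableSet]
    _ ≤ ENNReal.ofReal (π * (d - c)) * volume (Icc α β) :=
        Measure.prod_le_mul_of_measure_slice_le hT measurableSet_Icc (fun _ hp => hp.1) hslice
    _ = ENNReal.ofReal (π * (d - c) * (β - α)) := by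
        rw [Real.volume_Icc, ← ENNReal.ofReal_mul (by nlinarith [pi_pos])]

end InnerProductSpace

theorem MeasureTheory.measure_inter_image_add_left_comm {G : Type*} [AddGroup G]
    [MeasurableSpace G] [MeasurableAdd G] (μ : Measure G) [μ.IsAddLeftInvariant]
    (A B : Set G) (x : G) :
    μ (A ∩ ((x + ·) '' B)) = μ (B ∩ ((-x + ·) '' A)) := by
  rw [image_add_left, image_add_left, neg_neg, ← measure_preimage_add μ x (A ∩ (-x + ·) ⁻¹' B)]
  congr 1
  ext
  simp [and_comm]

theorem sq_norm_mem_Icc_of_mem_thickSphere {r δ : ℝ} (hδr : δ ≤ r) {ξ : E3}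
    (hξ : ξ ∈ thickSphere r δ) : ‖ξ‖ ^ 2 ∈ Icc ((r - δ) ^ 2) ((r + δ) ^ 2) :=
  ⟨pow_le_pow_left₀ (by linarith) hξ.1 2, pow_le_pow_left₀ (norm_nonneg ξ) hξ.2 2⟩

theorem thickSphere_inter_image_add_subset {r R δ Δ : ℝ} (hδr : δ ≤ r) (hΔR : Δ ≤ R) {ξ₀ : E3}
    (hξ₀ : ξ₀ ≠ 0) :
    thickSphere r δ ∩ ((ξ₀ + ·) '' thickSphere R Δ) ⊆
      {ξ | ‖ξ‖ ^ 2 ∈ Icc ((r - δ) ^ 2) ((r + δ) ^ 2) ∧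
        ⟪‖ξ₀‖⁻¹ • ξ₀, ξ⟫ ∈ Icc (((r - δ) ^ 2 + ‖ξ₀‖ ^ 2 - (R + Δ) ^ 2) / (2 * ‖ξ₀‖))
          (((r + δ) ^ 2 + ‖ξ₀‖ ^ 2 - (R - Δ) ^ 2) / (2 * ‖ξ₀‖))} := by
  rintro ξ ⟨hξ, hη⟩
  rw [image_add_left, mem_preimage, neg_add_eq_sub] at hη
  have ha : 0 < ‖ξ₀‖ := norm_pos_iff.2 hξ₀
  have hinner : ⟪‖ξ₀‖⁻¹ • ξ₀, ξ⟫ = (‖ξ‖ ^ 2 + ‖ξ₀‖ ^ 2 - ‖ξ - ξ₀‖ ^ 2) / (2 * ‖ξ₀‖) := by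
    rw [real_inner_smul_left, norm_sub_sq_real, real_inner_comm]
    field_simp
    ring
  obtain ⟨hξ_ge, hξ_le⟩ := sq_norm_mem_Icc_of_mem_thickSphere hδr hξ
  obtain ⟨hη_ge, hη_le⟩ := sq_norm_mem_Icc_of_mem_thickSphere hΔR hη
  refine ⟨⟨hξ_ge, hξ_le⟩, ?_⟩
  rw [hinner]
  constructor <;> gcongr

theorem volume_thickSphere_inter_image_add_le {r R δ Δ : ℝ} (hδ : 0 ≤ δ) (hδr : δ ≤ r)
    (hΔR : Δ ≤ R) {ξ₀ : E3} (hξ₀ : ξ₀ ≠ 0) :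
    volume (thickSphere r δ ∩ ((ξ₀ + ·) '' thickSphere R Δ)) ≤
      ENNReal.ofReal (8 * π * (r * δ) * (r * δ + R * Δ) / ‖ξ₀‖) := by
  have ha : 0 < ‖ξ₀‖ := norm_pos_iff.2 hξ₀
  refine (measure_mono (thickSphere_inter_image_add_subset hδr hΔR hξ₀)).trans <|
    (volume_shell_inter_slab_le finrank_euclideanSpace_fin (norm_smul_inv_norm hξ₀)
      (by nlinarith) _ _).trans_eq ?_
  congr 1
  field_simp
  ring

/-- Volume of intersection of two thickened spheres (Lemma C:Lemma1). -/
theorem thickened_spheres_intersection_volume :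
    ∃ C > (0 : ℝ),
      ∀ (r R δ Δ : ℝ), 0 < r → 0 < R → 0 < δ → 0 < Δ →
        2 * δ ≤ r → 2 * Δ ≤ R →
      ∀ (ξ₀ : E3), ξ₀ ≠ 0 →
      volume (thickSphere r δ ∩ ((fun η => ξ₀ + η) '' thickSphere R Δ))
        ≤ ENNReal.ofReal (C * (r * R * δ * Δ / ‖ξ₀‖)) := by
  refine ⟨16 * π, by positivity, fun r R δ Δ hr hR hδ hΔ hδr hΔR ξ₀ hξ₀ => ?_⟩
  have ha : 0 < ‖ξ₀‖ := norm_pos_iff.2 hξ₀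
  have hbound {P Q : ℝ} (hP : 0 ≤ P) (hPQ : P ≤ Q) (hprod : P * Q = r * R * δ * Δ) :
      ENNReal.ofReal (8 * π * P * (P + Q) / ‖ξ₀‖) ≤
        ENNReal.ofReal (16 * π * (r * R * δ * Δ / ‖ξ₀‖)) := by
    refine ENNReal.ofReal_le_ofReal ?_
    rw [← hprod, mul_div_assoc', div_le_div_iff_of_pos_right ha]
    nlinarith [mul_nonneg (mul_nonneg pi_pos.le hP) (sub_nonneg.2 hPQ)]
  rcases le_total (r * δ) (R * Δ) with h | h
  · exact (volume_thickSphere_inter_image_add_le hδ.le (by linarith) (by linarith) hξ₀).trans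
      (hbound (by positivity) h (by ring))
  · rw [measure_inter_image_add_left_comm]
    refine (volume_thickSphere_inter_image_add_le hΔ.le (by linarith) (by linarith)
      (neg_ne_zero.2 hξ₀)).trans ?_
    rw [norm_neg]
    exact hbound (by positivity) h (by ring)
end
end

section
/- There is a universal constant c > 0 with the following property. Let ξ₁, ξ₂ ∈ ℝ³ \ {0} with ξ₀ = ξ₁ + ξ₂ ≠ 0, let τ₁, τ₂ ∈ ℝ and τ₀ = τ₁ + τ₂, let s₀, s₁, s₂ ∈ {+1, −1} be signs, and set 𝔥_j = −τ_j + s_j|ξ_j| for j = 0, 1, 2 and θ₁₂ = ∠(s₁ξ₁, s₂ξ₂). Then max(|𝔥₀|, |𝔥₁|, |𝔥₂|) ≥ c·min(|ξ₁|, |ξ₂|)·θ₁₂². Moreover, if s₁ ≠ s₂, then also max(|𝔥₀|, |𝔥₁|, |𝔥₂|) ≥ c·|ξ₁||ξ₂|·θ₁₂²/|ξ₀|. -/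
/-!
Because `τ₀ = τ₁ + τ₂`, the times cancel in `𝔥₀ - 𝔥₁ - 𝔥₂ = s₀|ξ₀| - s₁|ξ₁| - s₂|ξ₂|`, so
`3 max |𝔥_j|` bounds the defect of the triangle inequality for `ξ₀ = ξ₁ + ξ₂`: `|ξ₁| + |ξ₂| - |ξ₀|`
for equal signs, `|ξ₀| - ||ξ₁| - |ξ₂||` for opposite signs. Multiplied by the matching sum, the
defect is `2(|ξ₁||ξ₂| ∓ ⟪ξ₁, ξ₂⟫) = 2|ξ₁||ξ₂|(1 - cos θ₁₂) ≥ 4|ξ₁||ξ₂|θ₁₂²/π²`.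
-/

open scoped InnerProductSpace

noncomputable section

open Real InnerProductGeometry

theorem min_mul_add_le_two_mul {a b : ℝ} (ha : 0 ≤ a) (hb : 0 ≤ b) :
    min a b * (a + b) ≤ 2 * (a * b) := by
  nlinarith [mul_le_mul_of_nonneg_left (min_le_right a b) ha,
    mul_le_mul_of_nonneg_right (min_le_left a b) hb]

theorem min_norm_le_two_mul_norm_mul_norm_div {G : Type*} [NormedAddCommGroup G] (x y : G)
    (h : x + y ≠ 0) :
    min ‖x‖ ‖y‖ ≤ 2 * (‖x‖ * ‖y‖ / ‖x + y‖) := by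
  have hpos : 0 < ‖x + y‖ := norm_pos_iff.2 h
  rw [mul_div_assoc', le_div_iff₀ hpos]
  calc min ‖x‖ ‖y‖ * ‖x + y‖ ≤ min ‖x‖ ‖y‖ * (‖x‖ + ‖y‖) := by gcongr; exact norm_add_le x y
    _ ≤ 2 * (‖x‖ * ‖y‖) := min_mul_add_le_two_mul (norm_nonneg x) (norm_nonneg y)

section AngleDefect

variable {V : Type*} [NormedAddCommGroup V] [InnerProductSpace ℝ V]

theorem norm_mul_norm_mul_angle_sq_le (x y : V) :
    ‖x‖ * ‖y‖ * angle x y ^ 2 ≤ π ^ 2 / 2 * (‖x‖ * ‖y‖ - ⟪x, y⟫_ℝ) := by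
  have hcos : cos (angle x y) ≤ 1 - 2 / π ^ 2 * angle x y ^ 2 :=
    cos_le_one_sub_mul_cos_sq (abs_le.2 ⟨by linarith [angle_nonneg x y, pi_pos],
      angle_le_pi x y⟩)
  have hπ : π ^ 2 / 2 * (2 / π ^ 2) = 1 := by field_simp
  calc ‖x‖ * ‖y‖ * angle x y ^ 2
      = π ^ 2 / 2 * (‖x‖ * ‖y‖ * (2 / π ^ 2 * angle x y ^ 2)) := by
        linear_combination (‖x‖ * ‖y‖ * angle x y ^ 2) * hπ.symm
    _ ≤ π ^ 2 / 2 * (‖x‖ * ‖y‖ * (1 - cos (angle x y))) := by gcongr; linarith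
    _ = π ^ 2 / 2 * (‖x‖ * ‖y‖ - ⟪x, y⟫_ℝ) := by rw [← cos_angle_mul_norm_mul_norm x y]; ring

theorem min_norm_mul_angle_sq_le (x y : V) :
    min ‖x‖ ‖y‖ * angle x y ^ 2 ≤ π ^ 2 * (‖x‖ + ‖y‖ - ‖x + y‖) := by
  have hdefect : (‖x‖ + ‖y‖ - ‖x + y‖) * (‖x‖ + ‖y‖ + ‖x + y‖)
      = 2 * (‖x‖ * ‖y‖ - ⟪x, y⟫_ℝ) := by
    linear_combination (-1 : ℝ) * norm_add_sq_real x y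
  have hmin := min_mul_add_le_two_mul (norm_nonneg x) (norm_nonneg y)
  have hangle := norm_mul_norm_mul_angle_sq_le x y
  have htri : 0 ≤ ‖x‖ + ‖y‖ - ‖x + y‖ := by linarith [norm_add_le x y]
  rcases (add_nonneg (norm_nonneg x) (norm_nonneg y)).eq_or_lt with hzero | hpos
  · have hmin_zero : min ‖x‖ ‖y‖ = 0 :=
      le_antisymm (by linarith [min_le_left ‖x‖ ‖y‖, norm_nonneg y])
        (le_min (norm_nonneg x) (norm_nonneg y))
    rw [hmin_zero, zero_mul]
    positivity
  · refine le_of_mul_le_mul_right ?_ hpos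
    nlinarith [mul_le_mul_of_nonneg_right hmin (sq_nonneg (angle x y)),
      mul_le_mul_of_nonneg_left (norm_add_le x y) htri, pi_pos]

theorem norm_mul_norm_mul_angle_neg_sq_div_le (x y : V) :
    ‖x‖ * ‖y‖ * angle x (-y) ^ 2 / ‖x + y‖ ≤ π ^ 2 / 2 * (‖x + y‖ - |‖x‖ - ‖y‖|) := by
  have hdefect : (‖x + y‖ - |‖x‖ - ‖y‖|) * (‖x + y‖ + |‖x‖ - ‖y‖|)
      = 2 * (‖x‖ * ‖y‖ - ⟪x, -y⟫_ℝ) := by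
    rw [inner_neg_right]
    linear_combination norm_add_sq_real x y - sq_abs (‖x‖ - ‖y‖)
  have hangle := norm_mul_norm_mul_angle_sq_le x (-y)
  rw [norm_neg] at hangle
  have hrev : |‖x‖ - ‖y‖| ≤ ‖x + y‖ := by
    simpa [sub_neg_eq_add] using abs_norm_sub_norm_le x (-y)
  rcases (norm_nonneg (x + y)).eq_or_lt with hzero | hpos
  · have hdiff : |‖x‖ - ‖y‖| = 0 := le_antisymm (hzero ▸ hrev) (abs_nonneg _)
    rw [← hzero, hdiff, div_zero, sub_zero, mul_zero]
  · rw [div_le_iff₀ hpos]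
    nlinarith [mul_le_mul_of_nonneg_left hrev (by linarith : 0 ≤ ‖x + y‖ - |‖x‖ - ‖y‖|),
      pi_pos]

theorem min_norm_mul_angle_smul_sq_le {s : ℝ} (hs : |s| = 1) (x y : V) :
    min ‖x‖ ‖y‖ * angle (s • x) (s • y) ^ 2 ≤ π ^ 2 * |(‖x + y‖ - |s * ‖x‖ + s * ‖y‖|)| := by
  rw [angle_smul_smul (by rintro rfl; simp at hs), ← mul_add, abs_mul, hs, one_mul,
    abs_of_nonneg (add_nonneg (norm_nonneg x) (norm_nonneg y)), abs_sub_comm]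
  exact (min_norm_mul_angle_sq_le x y).trans (by gcongr; exact le_abs_self _)

theorem norm_mul_norm_mul_angle_smul_neg_sq_div_le {s : ℝ} (hs : |s| = 1) (x y : V) :
    ‖x‖ * ‖y‖ * angle (s • x) (-s • y) ^ 2 / ‖x + y‖ ≤
      π ^ 2 / 2 * |(‖x + y‖ - |s * ‖x‖ + -s * ‖y‖|)| := by
  rw [neg_smul, ← smul_neg, angle_smul_smul (by rintro rfl; simp at hs), neg_mul,
    ← sub_eq_add_neg, ← mul_sub, abs_mul, hs, one_mul]
  exact (norm_mul_norm_mul_angle_neg_sq_div_le x y).trans (by gcongr; exact le_abs_self _)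

end AngleDefect

theorem abs_sub_sub_le_three_mul_max (a b c : ℝ) :
    |a - b - c| ≤ 3 * max |a| (max |b| |c|) := by
  calc |a - b - c| ≤ |a| + |b| + |c| := by
        linarith [abs_sub a b, abs_sub (a - b) c]
    _ ≤ 3 * max |a| (max |b| |c|) := by
        linarith [le_max_left |a| (max |b| |c|), le_max_left |b| |c|, le_max_right |b| |c|,
          le_max_right |a| (max |b| |c|)]

theorem abs_sub_abs_add_le_three_mul_max_weights {τ₁ τ₂ s₀ s₁ s₂ r₀ r₁ r₂ : ℝ}
    (hs₀ : |s₀| = 1) (hr₀ : 0 ≤ r₀) :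
    |(r₀ - |s₁ * r₁ + s₂ * r₂|)| ≤
      3 * max |(-(τ₁ + τ₂)) + s₀ * r₀| (max |(-τ₁) + s₁ * r₁| |(-τ₂) + s₂ * r₂|) := by
  calc |(r₀ - |s₁ * r₁ + s₂ * r₂|)|
      = |(|s₀ * r₀| - |s₁ * r₁ + s₂ * r₂|)| := by rw [abs_mul, hs₀, one_mul, abs_of_nonneg hr₀]
    _ ≤ |(-(τ₁ + τ₂) + s₀ * r₀) - (-τ₁ + s₁ * r₁) - (-τ₂ + s₂ * r₂)| := by
        rw [show (-(τ₁ + τ₂) + s₀ * r₀) - (-τ₁ + s₁ * r₁) - (-τ₂ + s₂ * r₂)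
          = s₀ * r₀ - (s₁ * r₁ + s₂ * r₂) by ring]
        exact abs_abs_sub_abs_le_abs_sub _ _
    _ ≤ _ := abs_sub_sub_le_three_mul_max _ _ _

/-- Lower bounds on the hyperbolic weights in a bilinear interaction in terms of the
interaction angle (Lemma I:Lemma1, estimates (I:10) and (I:16)). -/
theorem hyperbolic_weights_angle_bound :
    ∃ c > (0 : ℝ),
      ∀ (ξ₁ ξ₂ : E3), ξ₁ ≠ 0 → ξ₂ ≠ 0 → ξ₁ + ξ₂ ≠ 0 →
      ∀ (τ₁ τ₂ : ℝ),
      ∀ (s₀ s₁ s₂ : ℝ), (s₀ = 1 ∨ s₀ = -1) → (s₁ = 1 ∨ s₁ = -1) → (s₂ = 1 ∨ s₂ = -1) →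
      (max (|(-(τ₁ + τ₂)) + s₀ * ‖ξ₁ + ξ₂‖|)
          (max (|(-τ₁) + s₁ * ‖ξ₁‖|) (|(-τ₂) + s₂ * ‖ξ₂‖|))
        ≥ c * min ‖ξ₁‖ ‖ξ₂‖ * (InnerProductGeometry.angle (s₁ • ξ₁) (s₂ • ξ₂)) ^ 2)
      ∧ (s₁ ≠ s₂ →
        max (|(-(τ₁ + τ₂)) + s₀ * ‖ξ₁ + ξ₂‖|)
            (max (|(-τ₁) + s₁ * ‖ξ₁‖|) (|(-τ₂) + s₂ * ‖ξ₂‖|))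
          ≥ c * (‖ξ₁‖ * ‖ξ₂‖ * (InnerProductGeometry.angle (s₁ • ξ₁) (s₂ • ξ₂)) ^ 2
              / ‖ξ₁ + ξ₂‖)) := by
  refine ⟨1 / (3 * π ^ 2), by positivity, ?_⟩
  intro ξ₁ ξ₂ _ _ hξ₀ τ₁ τ₂ s₀ s₁ s₂ hs₀ hs₁ hs₂
  set M := max |(-(τ₁ + τ₂)) + s₀ * ‖ξ₁ + ξ₂‖| (max |(-τ₁) + s₁ * ‖ξ₁‖| |(-τ₂) + s₂ * ‖ξ₂‖|)
  have hres : |(‖ξ₁ + ξ₂‖ - |s₁ * ‖ξ₁‖ + s₂ * ‖ξ₂‖|)| ≤ 3 * M :=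
    abs_sub_abs_add_le_three_mul_max_weights ((abs_eq zero_le_one).2 hs₀) (norm_nonneg _)
  have hs₁_abs : |s₁| = 1 := (abs_eq zero_le_one).2 hs₁
  have hπ : 0 < 3 * π ^ 2 := by positivity
  rcases eq_or_ne s₁ s₂ with rfl | hs
  · refine ⟨?_, fun h => absurd rfl h⟩
    have hsame := min_norm_mul_angle_smul_sq_le hs₁_abs ξ₁ ξ₂
    rw [ge_iff_le, mul_assoc, one_div_mul_eq_div, div_le_iff₀ hπ]
    nlinarith [pi_pos]
  · obtain rfl : s₂ = -s₁ := by grind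
    set θ := angle (s₁ • ξ₁) (-s₁ • ξ₂)
    have hopposite : 1 / (3 * π ^ 2) * (‖ξ₁‖ * ‖ξ₂‖ * θ ^ 2 / ‖ξ₁ + ξ₂‖) ≤ M / 2 := by
      have := norm_mul_norm_mul_angle_smul_neg_sq_div_le hs₁_abs ξ₁ ξ₂
      rw [one_div_mul_eq_div, div_le_iff₀ hπ]
      nlinarith [pi_pos]
    have hM : 0 ≤ M := (abs_nonneg _).trans (le_max_left _ _)
    refine ⟨?_, fun _ => by linarith⟩
    calc 1 / (3 * π ^ 2) * min ‖ξ₁‖ ‖ξ₂‖ * θ ^ 2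
        ≤ 1 / (3 * π ^ 2) * (2 * (‖ξ₁‖ * ‖ξ₂‖ / ‖ξ₁ + ξ₂‖)) * θ ^ 2 := by
          gcongr
          exact min_norm_le_two_mul_norm_mul_norm_div ξ₁ ξ₂ hξ₀
      _ = 2 * (1 / (3 * π ^ 2) * (‖ξ₁‖ * ‖ξ₂‖ * θ ^ 2 / ‖ξ₁ + ξ₂‖)) := by ring
      _ ≤ M := by linarith
end
end

section
/- Let N, L > 0, let s ∈ {+1, −1} be a sign, let ω ∈ 𝕊² and 0 < γ < 1. If (τ, ξ) ∈ ℝ × ℝ³ satisfies N/2 < |ξ| ≤ N, |−τ + s·|ξ|| ≤ L and ∠(sξ, ω) ≤ γ, then |−τ + ξ·ω| ≤ L + N·γ². -/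
open scoped InnerProductSpace

noncomputable section

/-- An angularly localized piece of the thickened truncated null cone is contained in a
thickened null hyperplane (Lemma D:Lemma4). -/
theorem cone_sector_subset_null_hyperplane
    (N L : ℝ) (hN : 0 < N) (hL : 0 < L)
    (s : ℝ) (hs : s = 1 ∨ s = -1)
    (ω : E3) (hω : ‖ω‖ = 1)
    (γ : ℝ) (hγ0 : 0 < γ) (hγ1 : γ < 1)
    (τ : ℝ) (ξ : E3)
    (h₁ : N / 2 < ‖ξ‖) (h₂ : ‖ξ‖ ≤ N)
    (h₃ : |(-τ) + s * ‖ξ‖| ≤ L)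
    (h₄ : InnerProductGeometry.angle (s • ξ) ω ≤ γ) :
    |(-τ) + ⟪ξ, ω⟫_ℝ| ≤ L + N * γ ^ 2 := by
  set θ := InnerProductGeometry.angle (s • ξ) ω with hθ
  have hθ0 : 0 ≤ θ := InnerProductGeometry.angle_nonneg _ _
  have hs2 : s * s = 1 := by rcases hs with h | h <;> simp [h]
  have hsabs : |s| = 1 := by rcases hs with h | h <;> simp [h]
  have hkey : Real.cos θ * (‖s • ξ‖ * ‖ω‖) = ⟪s • ξ, ω⟫_ℝ :=
    InnerProductGeometry.cos_angle_mul_norm_mul_norm _ _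
  have hnorm : ‖s • ξ‖ = ‖ξ‖ := by rw [norm_smul]; simp [hsabs]
  have hinner : ⟪s • ξ, ω⟫_ℝ = s * ⟪ξ, ω⟫_ℝ := real_inner_smul_left _ _ _
  have hinner2 : ⟪ξ, ω⟫_ℝ = s * (Real.cos θ * ‖ξ‖) := by
    have := hkey
    rw [hnorm, hω, hinner, mul_one] at this
    rcases hs with h | h <;> rw [h] at this ⊢ <;> linarith
  have hcos1 : Real.cos θ ≤ 1 := Real.cos_le_one θ
  have hcoslb : 1 - θ ^ 2 / 2 ≤ Real.cos θ := Real.one_sub_sq_div_two_le_cos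
  have hθγ : θ ^ 2 ≤ γ ^ 2 := pow_le_pow_left₀ hθ0 h₄ 2
  have hξpos : 0 < ‖ξ‖ := by linarith
  have hbound : |s * ‖ξ‖ - ⟪ξ, ω⟫_ℝ| ≤ N * γ ^ 2 := by
    rw [hinner2]
    have : s * ‖ξ‖ - s * (Real.cos θ * ‖ξ‖) = s * (‖ξ‖ * (1 - Real.cos θ)) := by ring
    rw [this, abs_mul, hsabs, one_mul, abs_of_nonneg (by nlinarith)]
    nlinarith
  calc |(-τ) + ⟪ξ, ω⟫_ℝ| = |((-τ) + s * ‖ξ‖) - (s * ‖ξ‖ - ⟪ξ, ω⟫_ℝ)| := by ring_nf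
    _ ≤ |(-τ) + s * ‖ξ‖| + |s * ‖ξ‖ - ⟪ξ, ω⟫_ℝ| := abs_sub _ _
    _ ≤ L + N * γ ^ 2 := add_le_add h₃ hbound
end
end

section
/- Let n ≥ 1, let A₀, A₁, A₂ ⊆ ℝⁿ be measurable sets, and let F₁, F₂ ∈ L²(ℝⁿ) satisfy supp F₁ ⊆ A₁ and supp F₂ ⊆ A₂. Let M = min( sup_{ξ ∈ A₀} |A₁ ∩ (ξ − A₂)|, sup_{ξ ∈ A₂} |A₀ ∩ (ξ + A₁)|, sup_{ξ ∈ A₁} |A₀ ∩ (ξ + A₂)| ), where |·| denotes n-dimensional Lebesgue measure and ξ ± A = {ξ ± η : η ∈ A}. If M < ∞, then (∫_{A₀} |(F₁ * F₂)(ξ)|² dξ)^{1/2} ≤ M^{1/2} ‖F₁‖_{L²(ℝⁿ)} ‖F₂‖_{L²(ℝⁿ)}, where (F₁ * F₂)(ξ) = ∫_{ℝⁿ} F₁(η) F₂(ξ − η) dη. -/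
/-!
Write `g₁ = ‖F₁‖`, `g₂ = ‖F₂‖`, so that `|F₁ * F₂| ≤ g₁ * g₂`, and bound `(g₁ * g₂)(ξ)²` for
`ξ ∈ A₀` by Cauchy–Schwarz in one of two ways. Keeping the indicator of `A₁ ∩ (ξ - A₂)` on one
side gives `|A₁ ∩ (ξ - A₂)| · (g₁² * g₂²)(ξ)`, whose integral is at most the first supremum times
`‖g₁‖²‖g₂‖²`. Keeping `g₁` alone on one side gives `‖g₁‖² · (1_{A₁} * g₂²)(ξ)`, and by Tonelli
`∫_{A₀} 1_{A₁} * g₂² = ∫ |A₀ ∩ (ζ + A₁)| g₂(ζ)² dζ`, which yields the second supremum. The third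
case is the second one with the roles of `F₁` and `F₂` exchanged, by commutativity of convolution.
-/

open MeasureTheory Set
open scoped ENNReal

noncomputable section

theorem eLpNorm_two_eq_lintegral_sq {α ε : Type*} [MeasurableSpace α] [ENorm ε] (μ : Measure α)
    (f : α → ε) : eLpNorm f 2 μ = (∫⁻ x, ‖f x‖ₑ ^ 2 ∂μ) ^ (1 / 2 : ℝ) := by
  simp [eLpNorm_eq_lintegral_rpow_enorm_toReal two_ne_zero ENNReal.ofNat_ne_top]

theorem ENNReal.lintegral_mul_sq_le {α : Type*} [MeasurableSpace α] {μ : Measure α}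
    {f g : α → ℝ≥0∞} (hf : AEMeasurable f μ) (hg : AEMeasurable g μ) :
    (∫⁻ x, f x * g x ∂μ) ^ 2 ≤ (∫⁻ x, f x ^ 2 ∂μ) * ∫⁻ x, g x ^ 2 ∂μ := by
  have h := ENNReal.lintegral_mul_le_Lp_mul_Lq μ Real.HolderConjugate.two_two hf hg
  simp only [Pi.mul_apply, ENNReal.rpow_two] at h
  calc _ ≤ _ := pow_le_pow_left₀ zero_le h 2
    _ = _ := by
      rw [mul_pow, ← ENNReal.rpow_natCast, ← ENNReal.rpow_natCast, ← ENNReal.rpow_mul,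
        ← ENNReal.rpow_mul]
      norm_num

section LConvolution

variable {G : Type*} [AddCommGroup G] [MeasurableSpace G]

def translateOverlap (μ : Measure G) (s t u : Set G) : ℝ≥0∞ :=
  min (min (⨆ x ∈ s, μ (t ∩ (x - ·) '' u)) (⨆ z ∈ u, μ (s ∩ (z + ·) '' t)))
    (⨆ z ∈ t, μ (s ∩ (z + ·) '' u))

variable {μ : Measure G}

theorem lconvolution_apply_eq_lintegral_sub (f g : G → ℝ≥0∞) (x : G) :
    (f ⋆ₗ[μ] g) x = ∫⁻ y, f y * g (x - y) ∂μ := by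
  simp only [lconvolution_def, neg_add_eq_sub]

theorem enorm_integral_mul_sub_le_lconvolution {𝕜 : Type*} [RCLike 𝕜] (f g : G → 𝕜) (x : G) :
    ‖∫ y, f y * g (x - y) ∂μ‖ₑ ≤ ((‖f ·‖ₑ) ⋆ₗ[μ] (‖g ·‖ₑ)) x := by
  rw [lconvolution_apply_eq_lintegral_sub]
  simpa only [enorm_mul] using
    enorm_integral_le_lintegral_enorm (μ := μ) fun y => f y * g (x - y)

variable [MeasurableAdd₂ G] [μ.IsAddLeftInvariant]

theorem lintegral_indicator_one_mul_indicator_one_add {s t : Set G} (hs : MeasurableSet s)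
    (ht : MeasurableSet t) (z : G) :
    ∫⁻ y, t.indicator 1 y * s.indicator 1 (z + y) ∂μ = μ (s ∩ (z + ·) '' t) := by
  have hpre : (z + ·) ⁻¹' (s ∩ (z + ·) '' t) = t ∩ (z + ·) ⁻¹' s := by
    rw [preimage_inter, preimage_image_eq _ (add_right_injective z), inter_comm]
  rw [← measure_preimage_add, hpre,
    ← lintegral_indicator_one (ht.inter (measurable_const_add z hs))]
  refine lintegral_congr fun y => ?_
  by_cases h1 : y ∈ t <;> by_cases h2 : z + y ∈ s <;> simp [h1, h2]

variable [MeasurableNeg G] [SFinite μ]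

theorem lintegral_mul_lconvolution {w f g : G → ℝ≥0∞} (hw : AEMeasurable w μ)
    (hf : AEMeasurable f μ) (hg : AEMeasurable g μ) :
    ∫⁻ x, w x * (f ⋆ₗ[μ] g) x ∂μ = ∫⁻ z, (∫⁻ y, f y * w (z + y) ∂μ) * g z ∂μ := by
  simp only [lconvolution_def]
  calc ∫⁻ x, w x * ∫⁻ y, f y * g (-y + x) ∂μ ∂μ
      = ∫⁻ y, ∫⁻ x, w x * (f y * g (-y + x)) ∂μ ∂μ := by
        rw [lintegral_lintegral_swap (by fun_prop)]
        exact lintegral_congr fun x => (lintegral_const_mul'' _ (by fun_prop)).symm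
    _ = ∫⁻ y, ∫⁻ z, w (y + z) * (f y * g z) ∂μ ∂μ := by
        refine lintegral_congr fun y => ?_
        rw [← lintegral_add_left_eq_self _ y]
        simp only [neg_add_cancel_left]
    _ = ∫⁻ z, (∫⁻ y, f y * w (z + y) ∂μ) * g z ∂μ := by
        rw [lintegral_lintegral_swap (by fun_prop)]
        refine lintegral_congr fun z => ?_
        rw [← lintegral_mul_const'' _ (by fun_prop)]
        exact lintegral_congr fun y => by rw [add_comm y z]; ring

theorem lintegral_lconvolution {f g : G → ℝ≥0∞} (hf : AEMeasurable f μ)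
    (hg : AEMeasurable g μ) :
    ∫⁻ x, (f ⋆ₗ[μ] g) x ∂μ = (∫⁻ x, f x ∂μ) * ∫⁻ x, g x ∂μ := by
  simpa [lintegral_const_mul'' _ hg] using
    lintegral_mul_lconvolution (w := 1) aemeasurable_const hf hg

theorem setLIntegral_indicator_one_lconvolution {s t : Set G} (hs : MeasurableSet s)
    (ht : MeasurableSet t) {g : G → ℝ≥0∞} (hg : AEMeasurable g μ) :
    ∫⁻ x in s, (t.indicator 1 ⋆ₗ[μ] g) x ∂μ = ∫⁻ z, μ (s ∩ (z + ·) '' t) * g z ∂μ := by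
  calc ∫⁻ x in s, (t.indicator 1 ⋆ₗ[μ] g) x ∂μ
      = ∫⁻ x, s.indicator 1 x * (t.indicator 1 ⋆ₗ[μ] g) x ∂μ := by
        rw [← lintegral_indicator hs]
        refine lintegral_congr fun x => ?_
        by_cases hx : x ∈ s <;> simp [hx]
    _ = ∫⁻ z, (∫⁻ y, t.indicator 1 y * s.indicator 1 (z + y) ∂μ) * g z ∂μ :=
        lintegral_mul_lconvolution (aemeasurable_one.indicator hs)
          (aemeasurable_one.indicator ht) hg
    _ = ∫⁻ z, μ (s ∩ (z + ·) '' t) * g z ∂μ := by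
        simp_rw [lintegral_indicator_one_mul_indicator_one_add hs ht]

theorem lconvolution_sq_le_measure_mul {t u : Set G} (ht : MeasurableSet t)
    (hu : MeasurableSet u) {f g : G → ℝ≥0∞} (hf : AEMeasurable f μ) (hg : AEMeasurable g μ)
    (hft : Function.support f ⊆ t) (hgu : Function.support g ⊆ u) (x : G) :
    (f ⋆ₗ[μ] g) x ^ 2 ≤ μ (t ∩ (x - ·) '' u) * ((f · ^ 2) ⋆ₗ[μ] (g · ^ 2)) x := by
  have himage : (x - ·) '' u = (x - ·) ⁻¹' u :=
    congrFun (image_eq_preimage_of_inverse (sub_sub_cancel x) (sub_sub_cancel x)) u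
  set T := t ∩ (x - ·) ⁻¹' u
  have hT : MeasurableSet T := ht.inter (measurable_const_sub x hu)
  have hconv : (f ⋆ₗ[μ] g) x = ∫⁻ y, T.indicator 1 y * (f y * g (x - y)) ∂μ := by
    rw [lconvolution_apply_eq_lintegral_sub]
    refine lintegral_congr fun y => ?_
    by_cases hy : y ∈ T
    · simp [hy]
    · rcases not_and_or.mp hy with hyt | hyu
      · simp [Function.notMem_support.mp fun h => hyt (hft h)]
      · simp [Function.notMem_support.mp fun h => hyu (hgu h)]
  calc (f ⋆ₗ[μ] g) x ^ 2
      ≤ (∫⁻ y, T.indicator 1 y ^ 2 ∂μ) * ∫⁻ y, (f y * g (x - y)) ^ 2 ∂μ := by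
        rw [hconv]
        exact ENNReal.lintegral_mul_sq_le (aemeasurable_one.indicator hT)
          (hf.mul (hg.comp_quasiMeasurePreserving (quasiMeasurePreserving_sub_left μ x)))
    _ = μ (t ∩ (x - ·) '' u) * ((f · ^ 2) ⋆ₗ[μ] (g · ^ 2)) x := by
        rw [himage, ← lintegral_indicator_one hT, lconvolution_apply_eq_lintegral_sub]
        congr 1
        · refine lintegral_congr fun y => ?_
          by_cases hy : y ∈ T <;> simp [hy]
        · simp_rw [mul_pow]

theorem lconvolution_sq_le_lintegral_sq_mul {t : Set G} (ht : MeasurableSet t)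
    {f g : G → ℝ≥0∞} (hf : AEMeasurable f μ) (hg : AEMeasurable g μ)
    (hft : Function.support f ⊆ t) (x : G) :
    (f ⋆ₗ[μ] g) x ^ 2 ≤ (∫⁻ y, f y ^ 2 ∂μ) * (t.indicator 1 ⋆ₗ[μ] (g · ^ 2)) x := by
  have hconv : (f ⋆ₗ[μ] g) x = ∫⁻ y, f y * (t.indicator 1 y * g (x - y)) ∂μ := by
    rw [lconvolution_apply_eq_lintegral_sub]
    refine lintegral_congr fun y => ?_
    by_cases hy : y ∈ t
    · simp [hy]
    · simp [Function.notMem_support.mp fun h => hy (hft h)]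
  calc (f ⋆ₗ[μ] g) x ^ 2
      ≤ (∫⁻ y, f y ^ 2 ∂μ) * ∫⁻ y, (t.indicator 1 y * g (x - y)) ^ 2 ∂μ := by
        rw [hconv]
        exact ENNReal.lintegral_mul_sq_le hf ((aemeasurable_one.indicator ht).mul
          (hg.comp_quasiMeasurePreserving (quasiMeasurePreserving_sub_left μ x)))
    _ = (∫⁻ y, f y ^ 2 ∂μ) * (t.indicator 1 ⋆ₗ[μ] (g · ^ 2)) x := by
        rw [lconvolution_apply_eq_lintegral_sub]
        congr 1
        refine lintegral_congr fun y => ?_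
        by_cases hy : y ∈ t <;> simp [hy]

theorem setLIntegral_lconvolution_sq_le_iSup_measure_sub {s t u : Set G} (hs : MeasurableSet s)
    (ht : MeasurableSet t) (hu : MeasurableSet u) {f g : G → ℝ≥0∞} (hf : AEMeasurable f μ)
    (hg : AEMeasurable g μ) (hft : Function.support f ⊆ t) (hgu : Function.support g ⊆ u) :
    ∫⁻ x in s, (f ⋆ₗ[μ] g) x ^ 2 ∂μ ≤
      (⨆ x ∈ s, μ (t ∩ (x - ·) '' u)) * ((∫⁻ y, f y ^ 2 ∂μ) * ∫⁻ y, g y ^ 2 ∂μ) := by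
  set S := ⨆ x ∈ s, μ (t ∩ (x - ·) '' u)
  calc ∫⁻ x in s, (f ⋆ₗ[μ] g) x ^ 2 ∂μ
      ≤ ∫⁻ x in s, S * ((f · ^ 2) ⋆ₗ[μ] (g · ^ 2)) x ∂μ := by
        refine setLIntegral_mono' hs fun x hx => ?_
        exact (lconvolution_sq_le_measure_mul ht hu hf hg hft hgu x).trans
          (mul_le_mul_left (le_iSup₂ (f := fun x _ => μ (t ∩ (x - ·) '' u)) x hx) _)
    _ ≤ S * ∫⁻ x, ((f · ^ 2) ⋆ₗ[μ] (g · ^ 2)) x ∂μ := by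
        rw [lintegral_const_mul'' _
          (aemeasurable_lconvolution (by fun_prop) (by fun_prop)).restrict]
        exact mul_le_mul_right (setLIntegral_le_lintegral _ _) _
    _ = S * ((∫⁻ y, f y ^ 2 ∂μ) * ∫⁻ y, g y ^ 2 ∂μ) := by
        rw [lintegral_lconvolution (by fun_prop) (by fun_prop)]

theorem setLIntegral_lconvolution_sq_le_iSup_measure_add {s t u : Set G} (hs : MeasurableSet s)
    (ht : MeasurableSet t) {f g : G → ℝ≥0∞} (hf : AEMeasurable f μ)
    (hg : AEMeasurable g μ) (hft : Function.support f ⊆ t) (hgu : Function.support g ⊆ u) :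
    ∫⁻ x in s, (f ⋆ₗ[μ] g) x ^ 2 ∂μ ≤
      (⨆ z ∈ u, μ (s ∩ (z + ·) '' t)) * ((∫⁻ y, f y ^ 2 ∂μ) * ∫⁻ y, g y ^ 2 ∂μ) := by
  set S := ⨆ z ∈ u, μ (s ∩ (z + ·) '' t)
  have hweight : ∀ z, μ (s ∩ (z + ·) '' t) * g z ^ 2 ≤ S * g z ^ 2 := by
    intro z
    by_cases hz : z ∈ u
    · exact mul_le_mul_left (le_iSup₂ (f := fun z _ => μ (s ∩ (z + ·) '' t)) z hz) _
    · simp [Function.notMem_support.mp fun h => hz (hgu h)]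
  calc ∫⁻ x in s, (f ⋆ₗ[μ] g) x ^ 2 ∂μ
      ≤ ∫⁻ x in s, (∫⁻ y, f y ^ 2 ∂μ) * (t.indicator 1 ⋆ₗ[μ] (g · ^ 2)) x ∂μ :=
        lintegral_mono fun x => lconvolution_sq_le_lintegral_sq_mul ht hf hg hft x
    _ = (∫⁻ y, f y ^ 2 ∂μ) * ∫⁻ z, μ (s ∩ (z + ·) '' t) * g z ^ 2 ∂μ := by
        have ht1 : AEMeasurable (t.indicator (1 : G → ℝ≥0∞)) μ :=
          (measurable_one.indicator ht).aemeasurable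
        rw [lintegral_const_mul'' _ (aemeasurable_lconvolution ht1 (by fun_prop)).restrict,
          setLIntegral_indicator_one_lconvolution hs ht (by fun_prop)]
    _ ≤ (∫⁻ y, f y ^ 2 ∂μ) * ∫⁻ z, S * g z ^ 2 ∂μ :=
        mul_le_mul_right (lintegral_mono hweight) _
    _ = S * ((∫⁻ y, f y ^ 2 ∂μ) * ∫⁻ y, g y ^ 2 ∂μ) := by
        rw [lintegral_const_mul'' _ (by fun_prop)]
        ring

variable [μ.IsNegInvariant]

theorem setLIntegral_lconvolution_sq_le_translateOverlap_mul {s t u : Set G}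
    (hs : MeasurableSet s) (ht : MeasurableSet t) (hu : MeasurableSet u) {f g : G → ℝ≥0∞}
    (hf : AEMeasurable f μ) (hg : AEMeasurable g μ) (hft : Function.support f ⊆ t)
    (hgu : Function.support g ⊆ u) :
    ∫⁻ x in s, (f ⋆ₗ[μ] g) x ^ 2 ∂μ ≤
      translateOverlap μ s t u * ((∫⁻ y, f y ^ 2 ∂μ) * ∫⁻ y, g y ^ 2 ∂μ) := by
  have hswap := setLIntegral_lconvolution_sq_le_iSup_measure_add hs hu hg hf hgu hft
  rw [lconvolution_comm, mul_comm (∫⁻ y, g y ^ 2 ∂μ)] at hswap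
  simp only [translateOverlap, min_mul_of_nonneg _ _ zero_le]
  exact le_min (le_min (setLIntegral_lconvolution_sq_le_iSup_measure_sub hs ht hu hf hg hft hgu)
    (setLIntegral_lconvolution_sq_le_iSup_measure_add hs ht hf hg hft hgu)) hswap

theorem eLpNorm_indicator_lconvolution_le {s t u : Set G}
    (hs : MeasurableSet s) (ht : MeasurableSet t) (hu : MeasurableSet u) {f g : G → ℝ≥0∞}
    (hf : AEMeasurable f μ) (hg : AEMeasurable g μ) (hft : Function.support f ⊆ t)
    (hgu : Function.support g ⊆ u) :
    eLpNorm (s.indicator (f ⋆ₗ[μ] g)) 2 μ ≤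
      translateOverlap μ s t u ^ (1 / 2 : ℝ) * eLpNorm f 2 μ * eLpNorm g 2 μ := by
  simp only [eLpNorm_indicator_eq_eLpNorm_restrict hs, eLpNorm_two_eq_lintegral_sq, enorm_eq_self]
  rw [← ENNReal.mul_rpow_of_nonneg _ _ (by norm_num),
    ← ENNReal.mul_rpow_of_nonneg _ _ (by norm_num), mul_assoc]
  exact ENNReal.rpow_le_rpow
    (setLIntegral_lconvolution_sq_le_translateOverlap_mul hs ht hu hf hg hft hgu) (by norm_num)

end LConvolution

theorem bilinear_restriction_volume_bound_general
    (n : ℕ)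
    (A₀ A₁ A₂ : Set (EuclideanSpace ℝ (Fin n)))
    (hA₀ : MeasurableSet A₀) (hA₁ : MeasurableSet A₁) (hA₂ : MeasurableSet A₂)
    (F₁ F₂ : EuclideanSpace ℝ (Fin n) → ℂ)
    (hF₁ : MemLp F₁ 2 volume) (hF₂ : MemLp F₂ 2 volume)
    (hsupp₁ : Function.support F₁ ⊆ A₁)
    (hsupp₂ : Function.support F₂ ⊆ A₂)
    (M : ℝ≥0∞)
    (hM : M = min (min
        (⨆ ξ ∈ A₀, volume (A₁ ∩ ((fun η => ξ - η) '' A₂)))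
        (⨆ ξ ∈ A₂, volume (A₀ ∩ ((fun η => ξ + η) '' A₁))))
        (⨆ ξ ∈ A₁, volume (A₀ ∩ ((fun η => ξ + η) '' A₂)))) :
    eLpNorm (Set.indicator A₀ (fun ξ => ∫ η, F₁ η * F₂ (ξ - η))) 2 volume
      ≤ M ^ ((1 : ℝ) / 2) * eLpNorm F₁ 2 volume * eLpNorm F₂ 2 volume := by
  have hconv : ∀ ξ, ‖A₀.indicator (fun ξ => ∫ η, F₁ η * F₂ (ξ - η)) ξ‖ₑ ≤
      ‖A₀.indicator ((‖F₁ ·‖ₑ) ⋆ₗ (‖F₂ ·‖ₑ)) ξ‖ₑ := by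
    intro ξ
    by_cases hξ : ξ ∈ A₀
    · simpa [hξ] using enorm_integral_mul_sub_le_lconvolution F₁ F₂ ξ
    · simp [hξ]
  have hsupp_enorm : ∀ {F : EuclideanSpace ℝ (Fin n) → ℂ} {A}, Function.support F ⊆ A →
      Function.support (‖F ·‖ₑ) ⊆ A := fun h x hx => h (by simpa using hx)
  calc _ ≤ eLpNorm (A₀.indicator ((‖F₁ ·‖ₑ) ⋆ₗ (‖F₂ ·‖ₑ))) 2 volume :=
        eLpNorm_mono_enorm hconv
    _ ≤ M ^ ((1 : ℝ) / 2) * eLpNorm (‖F₁ ·‖ₑ) 2 volume * eLpNorm (‖F₂ ·‖ₑ) 2 volume := by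
        rw [hM]
        exact eLpNorm_indicator_lconvolution_le hA₀ hA₁ hA₂ hF₁.1.enorm hF₂.1.enorm
          (hsupp_enorm hsupp₁) (hsupp_enorm hsupp₂)
    _ = M ^ ((1 : ℝ) / 2) * eLpNorm F₁ 2 volume * eLpNorm F₂ 2 volume := by
        rw [eLpNorm_enorm, eLpNorm_enorm]

/-- The general bilinear L² Fourier restriction estimate via volumes of intersections
of translates (Lemma B:Lemma1). -/
theorem bilinear_restriction_volume_bound
    (n : ℕ) (hn : 1 ≤ n)
    (A₀ A₁ A₂ : Set (EuclideanSpace ℝ (Fin n)))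
    (hA₀ : MeasurableSet A₀) (hA₁ : MeasurableSet A₁) (hA₂ : MeasurableSet A₂)
    (F₁ F₂ : EuclideanSpace ℝ (Fin n) → ℂ)
    (hF₁ : MemLp F₁ 2 volume) (hF₂ : MemLp F₂ 2 volume)
    (hsupp₁ : Function.support F₁ ⊆ A₁)
    (hsupp₂ : Function.support F₂ ⊆ A₂)
    (M : ℝ≥0∞)
    (hM : M = min (min
        (⨆ ξ ∈ A₀, volume (A₁ ∩ ((fun η => ξ - η) '' A₂)))
        (⨆ ξ ∈ A₂, volume (A₀ ∩ ((fun η => ξ + η) '' A₁))))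
        (⨆ ξ ∈ A₁, volume (A₀ ∩ ((fun η => ξ + η) '' A₂))))
    (hMfin : M ≠ ⊤) :
    eLpNorm (Set.indicator A₀ (fun ξ => ∫ η, F₁ η * F₂ (ξ - η))) 2 volume
      ≤ M ^ ((1 : ℝ) / 2) * eLpNorm F₁ 2 volume * eLpNorm F₂ 2 volume :=
  bilinear_restriction_volume_bound_general n A₀ A₁ A₂ hA₀ hA₁ hA₂ F₁ F₂ hF₁ hF₂ hsupp₁ hsupp₂ M hM
end
end
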